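/- arXiv:1507.06448 — 5 statements merged into one kernel-verified Lean document; each statement's English description precedes it below -/
import Mathlib

section
/- Let v₀ ∈ L²(ℝ³; ℝ³), let α ∈ [1,3), R₀ > 0, V₀ > 0, and assume |v₀(x)| ≤ V₀ |x|^{-α} for almost every x with |x| > R₀. Then there exists a constant c > 0, depending only on ε, α and R₀ (and independent of x and of v₀), such that for every ε ∈ (0,1) and every x ∈ ℝ³ with |x| > R₀/(1-ε), one has ∫_{ℝ³} |v₀(y)|² / |x-y| dy ≤ (c/(ε|x|)) ‖v₀‖_{L²}² + (c/|x|^{1/2}) V₀ ‖v₀‖_{L²}. -/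
/-!
Split the integral at the ball `B(x, r)` with `r = ρ‖x‖`, `ρ = min ε (1/2)`. Outside it the kernel
is at most `1 / r ≤ 2 / (ε‖x‖)`. Inside it `‖y‖ > (1 - ρ)‖x‖ > R₀`, so the decay hypothesis and
`α ≥ 1` give `|v₀(y)| ≤ 2 V₀ R₀^(1-α) / ‖x‖`, and Cauchy–Schwarz against
`∫_{B(x,r)} |x - y|⁻² dy = 4π r ≤ 4π ‖x‖` bounds what is left by `C V₀ ‖v₀‖ / ‖x‖^(1/2)`.
-/

open MeasureTheory Metric Set Module

section L2

variable {α F : Type*} [MeasurableSpace α] {μ : Measure α} [NormedAddCommGroup F]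

theorem sqrt_integral_norm_sq_eq_toReal_eLpNorm {f : α → F} (hf : AEStronglyMeasurable f μ) :
    √(∫ a, ‖f a‖ ^ 2 ∂μ) = (eLpNorm f 2 μ).toReal := by
  rw [toReal_eLpNorm hf, lpNorm_eq_integral_norm_rpow_toReal two_ne_zero ENNReal.ofNat_ne_top hf,
    Real.sqrt_eq_rpow]
  norm_num

theorem integral_mul_le_sqrt_integral_sq_mul_sqrt_integral_sq {f g : α → ℝ}
    (hf₀ : 0 ≤ᵐ[μ] f) (hg₀ : 0 ≤ᵐ[μ] g) (hf : MemLp f 2 μ) (hg : MemLp g 2 μ) :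
    ∫ a, f a * g a ∂μ ≤ √(∫ a, f a ^ 2 ∂μ) * √(∫ a, g a ^ 2 ∂μ) := by
  simpa [Real.sqrt_eq_rpow] using integral_mul_le_Lp_mul_Lq_of_nonneg
    Real.HolderConjugate.two_two hf₀ hg₀ (by simpa using hf) (by simpa using hg)

end L2

lemma preimage_sub_right_ball_zero {E : Type*} [NormedAddCommGroup E] (x : E) (r : ℝ) :
    (· - x) ⁻¹' ball 0 r = ball x r := by
  ext y
  simp [dist_eq_norm]

section Kernel

variable {E : Type*} [NormedAddCommGroup E] [NormedSpace ℝ E] [FiniteDimensional ℝ E]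
  [MeasurableSpace E] [BorelSpace E] (μ : Measure E) [μ.IsAddHaarMeasure]

lemma pow_pred_smul_inv_sq {n : ℕ} (hn : 2 < n) {t : ℝ} (ht : 0 < t) :
    t ^ (n - 1) • t⁻¹ ^ 2 = t ^ (n - 3) := by
  rw [smul_eq_mul, show n - 1 = n - 3 + 2 by omega, pow_add, inv_pow,
    mul_inv_cancel_right₀ (pow_ne_zero 2 ht.ne')]

theorem integrableOn_ball_inv_norm_sq (hE : 2 < finrank ℝ E) (r : ℝ) :
    IntegrableOn (fun y : E => ‖y‖⁻¹ ^ 2) (ball 0 r) μ := by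
  have : Nontrivial E := Module.nontrivial_of_finrank_pos (R := ℝ) (by omega)
  rw [integrableOn_fun_norm_addHaar μ (f := fun t => t⁻¹ ^ 2)]
  exact ((continuous_pow _).integrableOn_Icc.mono_set Ioo_subset_Icc_self).congr_fun
    (fun t ht => (pow_pred_smul_inv_sq hE ht.1).symm) measurableSet_Ioo

theorem setIntegral_ball_inv_norm_sq (hE : 2 < finrank ℝ E) {r : ℝ} (hr : 0 ≤ r) :
    ∫ y in ball (0 : E) r, ‖y‖⁻¹ ^ 2 ∂μ =
      finrank ℝ E * μ.real (ball 0 1) * r ^ (finrank ℝ E - 2) / (finrank ℝ E - 2 : ℕ) := by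
  have : Nontrivial E := Module.nontrivial_of_finrank_pos (R := ℝ) (by omega)
  have hpolar : ∫ t in Ioi (0 : ℝ), t ^ (finrank ℝ E - 1) • (Iio r).indicator (· ⁻¹ ^ 2) t
      = ∫ t in Ioo 0 r, t ^ (finrank ℝ E - 3) := by
    rw [← integral_indicator measurableSet_Ioi, ← integral_indicator measurableSet_Ioo]
    congr 1 with t
    by_cases ht : 0 < t
    · by_cases htr : t < r
      · simpa [indicator, ht, htr] using pow_pred_smul_inv_sq hE ht
      · simp [indicator, ht, htr]
    · simp [indicator, ht]
  rw [← integral_indicator measurableSet_ball]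
  simp_rw [show ∀ y : E, (ball (0 : E) r).indicator (fun y => ‖y‖⁻¹ ^ 2) y
      = (Iio r).indicator (· ⁻¹ ^ 2) ‖y‖ from fun y => by simp [indicator]]
  rw [integral_fun_norm_addHaar μ, hpolar, ← integral_Ioc_eq_integral_Ioo,
    ← intervalIntegral.integral_of_le hr, integral_pow]
  rw [← Nat.cast_add_one, show finrank ℝ E - 3 + 1 = finrank ℝ E - 2 by omega,
    zero_pow (by omega), sub_zero, nsmul_eq_mul, smul_eq_mul]
  ring

theorem integrableOn_ball_inv_norm_sub_sq (hE : 2 < finrank ℝ E) (x : E) (r : ℝ) :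
    IntegrableOn (fun y : E => ‖x - y‖⁻¹ ^ 2) (ball x r) μ := by
  simp_rw [norm_sub_rev x, ← preimage_sub_right_ball_zero x r]
  exact (measurePreserving_sub_right μ x).integrableOn_comp_preimage
    (measurableEmbedding_subRight x) |>.2 (integrableOn_ball_inv_norm_sq μ hE r)

theorem setIntegral_ball_inv_norm_sub_sq (hE : 2 < finrank ℝ E) (x : E) {r : ℝ} (hr : 0 ≤ r) :
    ∫ y in ball x r, ‖x - y‖⁻¹ ^ 2 ∂μ =
      finrank ℝ E * μ.real (ball 0 1) * r ^ (finrank ℝ E - 2) / (finrank ℝ E - 2 : ℕ) := by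
  simp_rw [norm_sub_rev x, ← preimage_sub_right_ball_zero x r]
  rw [(measurePreserving_sub_right μ x).setIntegral_preimage_emb (measurableEmbedding_subRight x)
    (fun y => ‖y‖⁻¹ ^ 2), setIntegral_ball_inv_norm_sq μ hE hr]

end Kernel

lemma sq_div_le_sq_div_add_ite {a d r S : ℝ} (ha : 0 ≤ a) (hd : 0 ≤ d) (hr : 0 < r)
    (hS : d < r → a ≤ S) :
    a ^ 2 / d ≤ a ^ 2 / r + if d < r then S * (a * d⁻¹) else 0 := by
  split_ifs with hdr
  · calc a ^ 2 / d = a * (a * d⁻¹) := by ring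
      _ ≤ S * (a * d⁻¹) := by gcongr; exact hS hdr
      _ ≤ a ^ 2 / r + S * (a * d⁻¹) := le_add_of_nonneg_left (by positivity)
  · rw [add_zero]
    exact div_le_div_of_nonneg_left (sq_nonneg a) hr (not_lt.1 hdr)

theorem integral_norm_sq_div_norm_sub_le {E F : Type*} [NormedAddCommGroup E] [MeasurableSpace E]
    [OpensMeasurableSpace E] [NormedAddCommGroup F] {μ : Measure E} {v : E → F}
    (hv : MemLp v 2 μ) {x : E} {r S : ℝ} (hr : 0 < r) (hS₀ : 0 ≤ S)
    (hS : ∀ᵐ y ∂μ, y ∈ ball x r → ‖v y‖ ≤ S)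
    (hk : IntegrableOn (fun y => ‖x - y‖⁻¹ ^ 2) (ball x r) μ) :
    ∫ y, ‖v y‖ ^ 2 / ‖x - y‖ ∂μ ≤ (eLpNorm v 2 μ).toReal ^ 2 / r
      + S * (eLpNorm v 2 μ).toReal * √(∫ y in ball x r, ‖x - y‖⁻¹ ^ 2 ∂μ) := by
  set N := (eLpNorm v 2 μ).toReal
  have hv₂ : Integrable (fun y => ‖v y‖ ^ 2) μ := (memLp_two_iff_integrable_sq_norm hv.1).1 hv
  have hN : √(∫ y, ‖v y‖ ^ 2 ∂μ) = N := sqrt_integral_norm_sq_eq_toReal_eLpNorm hv.1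
  have hkB : MemLp (fun y => ‖x - y‖⁻¹) 2 (μ.restrict (ball x r)) := (memLp_two_iff_integrable_sq
      (continuous_const.sub continuous_id).norm.measurable.inv.aestronglyMeasurable).2 hk
  have hnear : ∫ y in ball x r, ‖v y‖ * ‖x - y‖⁻¹ ∂μ
      ≤ N * √(∫ y in ball x r, ‖x - y‖⁻¹ ^ 2 ∂μ) := by
    refine (integral_mul_le_sqrt_integral_sq_mul_sqrt_integral_sq
      (.of_forall fun _ => norm_nonneg _) (.of_forall fun _ => by positivity)
      (hv.norm.restrict _) hkB).trans ?_
    rw [← hN]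
    refine mul_le_mul_of_nonneg_right ?_ (Real.sqrt_nonneg _)
    exact Real.sqrt_le_sqrt (setIntegral_le_integral hv₂ (.of_forall fun _ => by positivity))
  have hnear_int : IntegrableOn (fun y => S * (‖v y‖ * ‖x - y‖⁻¹)) (ball x r) μ :=
    ((hv.norm.restrict _).integrable_mul hkB).const_mul S
  have hdom : ∀ᵐ y ∂μ, ‖v y‖ ^ 2 / ‖x - y‖
      ≤ ‖v y‖ ^ 2 / r + (ball x r).indicator (fun y => S * (‖v y‖ * ‖x - y‖⁻¹)) y := by
    filter_upwards [hS] with y hy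
    simp only [indicator, mem_ball, dist_eq_norm, norm_sub_rev y x] at hy ⊢
    exact sq_div_le_sq_div_add_ite (norm_nonneg _) (norm_nonneg _) hr hy
  calc ∫ y, ‖v y‖ ^ 2 / ‖x - y‖ ∂μ
      ≤ ∫ y, ‖v y‖ ^ 2 / r + (ball x r).indicator (fun y => S * (‖v y‖ * ‖x - y‖⁻¹)) y ∂μ :=
        integral_mono_of_nonneg (.of_forall fun _ => by positivity)
          ((hv₂.div_const r).add (hnear_int.integrable_indicator measurableSet_ball)) hdom
    _ = N ^ 2 / r + S * ∫ y in ball x r, ‖v y‖ * ‖x - y‖⁻¹ ∂μ := by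
        rw [integral_add (hv₂.div_const r) (hnear_int.integrable_indicator measurableSet_ball),
          integral_div, integral_indicator measurableSet_ball, integral_const_mul, ← hN,
          Real.sq_sqrt (integral_nonneg fun _ => by positivity)]
    _ ≤ N ^ 2 / r + S * N * √(∫ y in ball x r, ‖x - y‖⁻¹ ^ 2 ∂μ) := by
        rw [mul_assoc]
        gcongr

lemma rpow_neg_le_rpow_one_sub_div {α R t : ℝ} (hα : 1 ≤ α) (hR : 0 < R) (hRt : R ≤ t) :
    t ^ (-α) ≤ R ^ (1 - α) / t := by
  have ht : 0 < t := hR.trans_le hRt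
  rw [le_div_iff₀ ht, ← Real.rpow_add_one ht.ne', neg_add_eq_sub]
  exact Real.rpow_le_rpow_of_nonpos hR hRt (by linarith)

local notation "ℝ³" => EuclideanSpace ℝ (Fin 3)

theorem integral_norm_sq_div_norm_sub_le_of_decay {F : Type*} [NormedAddCommGroup F] {v : ℝ³ → F}
    (hv : MemLp v 2 volume) {α R₀ V₀ : ℝ} (hα : 1 ≤ α) (hR₀ : 0 < R₀) (hV₀ : 0 ≤ V₀)
    (hdecay : ∀ᵐ y, R₀ < ‖y‖ → ‖v y‖ ≤ V₀ * ‖y‖ ^ (-α)) {ρ : ℝ} (hρ₀ : 0 < ρ) (hρ : ρ ≤ 1 / 2)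
    {x : ℝ³} (hx : R₀ < (1 - ρ) * ‖x‖) :
    ∫ y, ‖v y‖ ^ 2 / ‖x - y‖ ≤ (eLpNorm v 2 volume).toReal ^ 2 / (ρ * ‖x‖)
      + 2 * R₀ ^ (1 - α) * √(3 * volume.real (ball (0 : ℝ³) 1)) / √‖x‖
        * (V₀ * (eLpNorm v 2 volume).toReal) := by
  set N := (eLpNorm v 2 volume).toReal
  set K := 3 * volume.real (ball (0 : ℝ³) 1)
  have hx₀ : 0 < ‖x‖ := by nlinarith
  have hS : ∀ᵐ y, y ∈ ball x (ρ * ‖x‖) → ‖v y‖ ≤ 2 * V₀ * R₀ ^ (1 - α) / ‖x‖ := by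
    filter_upwards [hdecay] with y hy hyx
    have hxy : (1 - ρ) * ‖x‖ < ‖y‖ := by
      have := norm_sub_norm_le x y
      rw [mem_ball, dist_eq_norm, norm_sub_rev] at hyx
      linarith
    have hR₀y : R₀ < ‖y‖ := hx.trans hxy
    calc ‖v y‖ ≤ V₀ * ‖y‖ ^ (-α) := hy hR₀y
      _ ≤ V₀ * (R₀ ^ (1 - α) / ‖y‖) := by gcongr; exact rpow_neg_le_rpow_one_sub_div hα hR₀ hR₀y.le
      _ ≤ V₀ * (R₀ ^ (1 - α) / (‖x‖ / 2)) := by gcongr; nlinarith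
      _ = 2 * V₀ * R₀ ^ (1 - α) / ‖x‖ := by ring
  have hdim : finrank ℝ ℝ³ = 3 := finrank_euclideanSpace_fin
  have hkernel : ∫ y in ball x (ρ * ‖x‖), ‖x - y‖⁻¹ ^ 2 = K * (ρ * ‖x‖) := by
    rw [setIntegral_ball_inv_norm_sub_sq volume (by omega) x (by positivity), hdim]
    norm_num [K]
  have hsqrt : √(K * (ρ * ‖x‖)) ≤ √K * √‖x‖ := by
    rw [← Real.sqrt_mul (by positivity)]
    gcongr
    nlinarith
  refine (integral_norm_sq_div_norm_sub_le hv (by positivity) (by positivity) hS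
    (integrableOn_ball_inv_norm_sub_sq volume (by omega) x _)).trans ?_
  rw [hkernel]
  calc N ^ 2 / (ρ * ‖x‖) + 2 * V₀ * R₀ ^ (1 - α) / ‖x‖ * N * √(K * (ρ * ‖x‖))
      ≤ N ^ 2 / (ρ * ‖x‖) + 2 * V₀ * R₀ ^ (1 - α) / ‖x‖ * N * (√K * √‖x‖) := by gcongr
    _ = N ^ 2 / (ρ * ‖x‖) + 2 * R₀ ^ (1 - α) * √K / √‖x‖ * (V₀ * N) := by
      congr 1
      field_simp
      rw [Real.sq_sqrt hx₀.le]
      ring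

theorem stmt_0_general (α R₀ : ℝ) (hα : 1 ≤ α) (hR₀ : 0 < R₀) :
    ∃ c > 0, ∀ V₀ : ℝ, 0 < V₀ →
      ∀ v₀ : EuclideanSpace ℝ (Fin 3) → EuclideanSpace ℝ (Fin 3),
        MemLp v₀ 2 volume →
        (∀ᵐ y ∂(volume : Measure (EuclideanSpace ℝ (Fin 3))),
          R₀ < ‖y‖ → ‖v₀ y‖ ≤ V₀ * ‖y‖ ^ (-α)) →
        ∀ ε ∈ Set.Ioo (0:ℝ) 1, ∀ x : EuclideanSpace ℝ (Fin 3),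
          R₀ / (1 - ε) < ‖x‖ →
          (∫ y, ‖v₀ y‖ ^ 2 / ‖x - y‖) ≤
            c / (ε * ‖x‖) * (eLpNorm v₀ 2 volume).toReal ^ 2
              + c / ‖x‖ ^ ((1:ℝ)/2) * (V₀ * (eLpNorm v₀ 2 volume).toReal) := by
  set C := 2 * R₀ ^ (1 - α) * √(3 * volume.real (ball (0 : ℝ³) 1))
  have hC : 0 ≤ C := by positivity
  refine ⟨2 + C, by positivity, ?_⟩
  rintro V₀ hV₀ v₀ hv₀ hdecay ε ⟨hε₀, hε₁⟩ x hx
  rw [div_lt_iff₀ (by linarith)] at hx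
  set N := (eLpNorm v₀ 2 volume).toReal
  set ρ := min ε (1 / 2)
  have hρ : 0 < ρ ∧ ρ ≤ 1 / 2 ∧ ρ ≤ ε ∧ ε ≤ 2 * ρ := by
    refine ⟨lt_min hε₀ (by norm_num), min_le_right _ _, min_le_left _ _, ?_⟩
    rcases min_choice ε (1 / 2) with h | h <;> simp only [ρ, h] <;> linarith
  have hx₀ : 0 < ‖x‖ := by nlinarith
  refine (integral_norm_sq_div_norm_sub_le_of_decay hv₀ hα hR₀ hV₀.le hdecay hρ.1 hρ.2.1
    (by nlinarith)).trans (add_le_add ?_ ?_)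
  · calc N ^ 2 / (ρ * ‖x‖) ≤ 2 / (ε * ‖x‖) * N ^ 2 := by
          rw [div_mul_eq_mul_div, div_le_div_iff₀ (by positivity) (by positivity)]
          nlinarith [mul_le_mul_of_nonneg_right hρ.2.2.2 (mul_nonneg (sq_nonneg N) hx₀.le)]
      _ ≤ (2 + C) / (ε * ‖x‖) * N ^ 2 := by gcongr; linarith
  · rw [← Real.sqrt_eq_rpow]
    gcongr
    linarith

theorem stmt_0 (α R₀ : ℝ) (hα : 1 ≤ α) (hα' : α < 3) (hR₀ : 0 < R₀) :
    ∃ c > 0, ∀ V₀ : ℝ, 0 < V₀ →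
      ∀ v₀ : EuclideanSpace ℝ (Fin 3) → EuclideanSpace ℝ (Fin 3),
        MemLp v₀ 2 volume →
        (∀ᵐ y ∂(volume : Measure (EuclideanSpace ℝ (Fin 3))),
          R₀ < ‖y‖ → ‖v₀ y‖ ≤ V₀ * ‖y‖ ^ (-α)) →
        ∀ ε ∈ Set.Ioo (0:ℝ) 1, ∀ x : EuclideanSpace ℝ (Fin 3),
          R₀ / (1 - ε) < ‖x‖ →
          (∫ y, ‖v₀ y‖ ^ 2 / ‖x - y‖) ≤
            c / (ε * ‖x‖) * (eLpNorm v₀ 2 volume).toReal ^ 2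
              + c / ‖x‖ ^ ((1:ℝ)/2) * (V₀ * (eLpNorm v₀ 2 volume).toReal) :=
  stmt_0_general α R₀ hα hR₀
end

section
/- There exists a constant c > 0 such that for every x ∈ ℝ³ with x ≠ 0, the function y ↦ |y|^{-2} |x-y|^{-2} is integrable on ℝ³ and ∫_{ℝ³} |y|^{-2} |x-y|^{-2} dy ≤ c / |x|. -/
/-!
If `‖y‖ ≤ ‖u - y‖` with `‖u‖ = 1`, then `‖u - y‖ ≥ 1/2` and `‖u - y‖ ≥ ‖y‖`, so the integrand is at
most `8 g(y)` with `g(y) = ‖y‖⁻² (1 + ‖y‖²)⁻¹`; symmetrically in the other case with `u - y`.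
In dimension 3 the radial function `g` is integrable because `r² g(r) = (1 + r²)⁻¹`.
A general `x ≠ 0` reduces to `x / ‖x‖` by the scaling `y ↦ ‖x‖ y`, which multiplies the
integral by `‖x‖ ^ (3 - 4)`.
-/

open MeasureTheory Module

noncomputable section

namespace InvSqConv

variable {E : Type*} [NormedAddCommGroup E]

def integrand (x y : E) : ℝ := (‖y‖ ^ 2)⁻¹ * (‖x - y‖ ^ 2)⁻¹

def majorant (y : E) : ℝ := (‖y‖ ^ 2 * (1 + ‖y‖ ^ 2))⁻¹

lemma majorant_nonneg (y : E) : 0 ≤ majorant y := by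
  unfold majorant; positivity

lemma inv_sq_mul_inv_sq_le {a b : ℝ} (hb : 0 ≤ b) (hba : b ≤ a) (hab : 1 ≤ a + b) :
    (b ^ 2)⁻¹ * (a ^ 2)⁻¹ ≤ 8 * (b ^ 2 * (1 + b ^ 2))⁻¹ := by
  rcases hb.eq_or_lt with rfl | hb
  · simp
  have ha : 0 < a := hb.trans_le hba
  rw [mul_inv, mul_left_comm]
  gcongr
  rw [inv_eq_one_div, ← div_eq_mul_inv, div_le_div_iff₀ (by positivity) (by positivity)]
  nlinarith

lemma integrand_self_sub (u y : E) : integrand u (u - y) = integrand u y := by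
  rw [integrand, integrand, sub_sub_cancel, mul_comm]

lemma integrand_le_majorant {u : E} (hu : ‖u‖ = 1) (y : E) :
    integrand u y ≤ 8 * (majorant y + majorant (u - y)) := by
  have hsum : 1 ≤ ‖u - y‖ + ‖y‖ := hu ▸ norm_le_norm_sub_add u y
  rcases le_total ‖y‖ ‖u - y‖ with h | h
  · calc integrand u y ≤ 8 * majorant y := inv_sq_mul_inv_sq_le (norm_nonneg _) h hsum
      _ ≤ _ := by gcongr; exact le_add_of_nonneg_right (majorant_nonneg _)
  · calc integrand u y = integrand u (u - y) := (integrand_self_sub u y).symm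
      _ ≤ 8 * majorant (u - y) := by
        refine inv_sq_mul_inv_sq_le (norm_nonneg _) (by rwa [sub_sub_cancel]) ?_
        rwa [sub_sub_cancel, add_comm]
      _ ≤ _ := by gcongr; exact le_add_of_nonneg_left (majorant_nonneg _)

variable [NormedSpace ℝ E]

lemma integrand_eq_smul (x y : E) {R : ℝ} (hR : R ≠ 0) :
    integrand x y = (R ^ 4)⁻¹ * integrand (R⁻¹ • x) (R⁻¹ • y) := by
  simp only [integrand, ← smul_sub, norm_smul, mul_pow, Real.norm_eq_abs, abs_inv]
  field_simp
  rw [Even.pow_abs ⟨2, rfl⟩]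

variable [MeasurableSpace E] [BorelSpace E] [FiniteDimensional ℝ E]
  (μ : Measure E) [μ.IsAddHaarMeasure]

lemma integrable_majorant (hE : finrank ℝ E = 3) : Integrable majorant μ := by
  have : Nontrivial E := Module.nontrivial_of_finrank_eq_succ hE
  refine (integrable_fun_norm_addHaar μ (f := fun r => (r ^ 2 * (1 + r ^ 2))⁻¹)).2 ?_
  refine integrable_inv_one_add_sq.integrableOn.congr_fun (fun r (hr : 0 < r) => ?_)
    measurableSet_Ioi
  rw [hE, smul_eq_mul, mul_inv, ← mul_assoc, show 3 - 1 = 2 from rfl,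
    mul_inv_cancel₀ (by positivity), one_mul]

lemma integrable_integrand_of_norm_eq_one (hE : finrank ℝ E = 3) {u : E} (hu : ‖u‖ = 1) :
    Integrable (integrand u) μ := by
  have hg := integrable_majorant μ hE
  refine Integrable.mono' ((hg.add (hg.comp_sub_left u)).const_mul 8) ?_ ?_
  · unfold integrand; fun_prop
  · filter_upwards with y
    rw [Real.norm_of_nonneg (by unfold integrand; positivity)]
    exact integrand_le_majorant hu y

lemma integral_integrand_le_of_norm_eq_one (hE : finrank ℝ E = 3) {u : E} (hu : ‖u‖ = 1) :
    ∫ y, integrand u y ∂μ ≤ 16 * ∫ y, majorant y ∂μ := by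
  have hg := integrable_majorant μ hE
  calc ∫ y, integrand u y ∂μ ≤ ∫ y, 8 * (majorant y + majorant (u - y)) ∂μ :=
        integral_mono (integrable_integrand_of_norm_eq_one μ hE hu)
          ((hg.add (hg.comp_sub_left u)).const_mul 8) (integrand_le_majorant hu)
    _ = 16 * ∫ y, majorant y ∂μ := by
        rw [integral_const_mul, integral_add hg (hg.comp_sub_left u),
          integral_sub_left_eq_self majorant μ u]
        ring

lemma integrable_integrand (hE : finrank ℝ E = 3) {x : E} (hx : x ≠ 0) :
    Integrable (integrand x) μ := by
  have hR : ‖x‖ ≠ 0 := norm_ne_zero_iff.2 hx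
  have hu : ‖‖x‖⁻¹ • x‖ = 1 := norm_smul_inv_norm hx
  refine (((integrable_integrand_of_norm_eq_one μ hE hu).comp_smul (inv_ne_zero hR)).const_mul
    (‖x‖ ^ 4)⁻¹).congr (.of_forall fun y => ?_)
  exact (integrand_eq_smul x y hR).symm

lemma integral_integrand_eq {x : E} (hx : x ≠ 0) :
    ∫ y, integrand x y ∂μ = ‖x‖ ^ finrank ℝ E / ‖x‖ ^ 4 * ∫ y, integrand (‖x‖⁻¹ • x) y ∂μ := by
  have hR : ‖x‖ ≠ 0 := norm_ne_zero_iff.2 hx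
  simp_rw [integrand_eq_smul x _ hR]
  rw [integral_const_mul, Measure.integral_comp_inv_smul_of_nonneg μ _ (norm_nonneg x),
    smul_eq_mul, div_eq_inv_mul, mul_assoc]

lemma integral_integrand_le (hE : finrank ℝ E = 3) {x : E} (hx : x ≠ 0) :
    ∫ y, integrand x y ∂μ ≤ 16 * (∫ y, majorant y ∂μ) / ‖x‖ := by
  have hR : 0 < ‖x‖ := norm_pos_iff.2 hx
  rw [integral_integrand_eq μ hx, hE, div_eq_mul_inv _ ‖x‖, mul_comm _ (‖x‖⁻¹),
    show ‖x‖ ^ 3 / ‖x‖ ^ 4 = ‖x‖⁻¹ by field_simp]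
  gcongr
  exact integral_integrand_le_of_norm_eq_one μ hE (norm_smul_inv_norm hx)

end InvSqConv

open InvSqConv

theorem stmt_1 :
    ∃ c > 0, ∀ x : EuclideanSpace ℝ (Fin 3), x ≠ 0 →
      Integrable (fun y : EuclideanSpace ℝ (Fin 3) => (‖y‖ ^ 2)⁻¹ * (‖x - y‖ ^ 2)⁻¹) volume ∧
      (∫ y : EuclideanSpace ℝ (Fin 3), (‖y‖ ^ 2)⁻¹ * (‖x - y‖ ^ 2)⁻¹) ≤ c / ‖x‖ := by
  have hE : finrank ℝ (EuclideanSpace ℝ (Fin 3)) = 3 := finrank_euclideanSpace_fin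
  have hM : 0 ≤ ∫ y : EuclideanSpace ℝ (Fin 3), majorant y := integral_nonneg majorant_nonneg
  refine ⟨16 * (∫ y : EuclideanSpace ℝ (Fin 3), majorant y) + 1, by positivity,
    fun x hx => ⟨integrable_integrand volume hE hx, ?_⟩⟩
  calc _ ≤ 16 * (∫ y : EuclideanSpace ℝ (Fin 3), majorant y) / ‖x‖ :=
        integral_integrand_le volume hE hx
    _ ≤ _ := by gcongr; linarith
end
end

section
/- Let v₀ ∈ L²(ℝ³; ℝ³) and R₀ > 0. Then there exists a constant c > 0, depending only on R₀, such that for all t > 0 and all x ∈ ℝ³ with |x| > 2R₀, ∫_{|y| < R₀} H(t, x-y) |v₀(y)| dy ≤ c ‖v₀‖_{L²} (|x| + t^{1/2})^{-3}. -/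
/-!
For `|y| < R₀ < |x|/2` we have `|x - y| ≥ |x|/2`, and the heat kernel obeys the scale-invariant
bound `H(t, z) ≤ C (|z| + √t)⁻³` (from `(1 + u)³ ≲ exp(u²/4)` with `u = |z|/√t`), so `H(t, x - y)`
is bounded by a multiple of `(|x| + √t)⁻³` on the ball. What remains is `∫_{B} |v₀|`, which
Hölder bounds by `‖v₀‖_{L²} |B|^{1/2}`.
-/

open MeasureTheory

/-- The heat kernel on `ℝ³`. -/
noncomputable def heatKernel (s : ℝ) (z : EuclideanSpace ℝ (Fin 3)) : ℝ :=
  (4 * Real.pi * s) ^ (-(3:ℝ)/2) * Real.exp (-‖z‖ ^ 2 / (4 * s))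

open scoped ENNReal

lemma one_add_pow_three_le_mul_exp (u : ℝ) :
    (1 + u) ^ 3 ≤ 96 * Real.exp (u ^ 2 / 4) := by
  have hexp := Real.quadratic_le_exp_of_nonneg (by positivity : 0 ≤ u ^ 2 / 4)
  nlinarith [sq_nonneg (u - 1), sq_nonneg (u ^ 2 - u), sq_nonneg u]

lemma Real.rpow_neg_three {a : ℝ} (ha : 0 ≤ a) : a ^ (-(3:ℝ)) = (a ^ 3)⁻¹ := by
  rw [Real.rpow_neg ha]; norm_cast

lemma heatKernel_le (t : ℝ) (ht : 0 < t) (z : EuclideanSpace ℝ (Fin 3)) :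
    heatKernel t z ≤ 96 * (‖z‖ + t ^ ((1:ℝ)/2)) ^ (-(3:ℝ)) := by
  rw [← Real.sqrt_eq_rpow]
  set s := √t
  have hs : 0 < s := Real.sqrt_pos.2 ht
  have hts : t = s ^ 2 := (Real.sq_sqrt ht.le).symm
  have hprefactor : (4 * Real.pi * t) ^ (-(3:ℝ)/2) ≤ (s ^ 3)⁻¹ := by
    calc (4 * Real.pi * t) ^ (-(3:ℝ)/2) ≤ t ^ (-(3:ℝ)/2) :=
          Real.rpow_le_rpow_of_nonpos ht (by nlinarith [Real.pi_gt_three]) (by norm_num)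
      _ = (s ^ 3)⁻¹ := by
          rw [hts, ← Real.rpow_natCast, ← Real.rpow_mul hs.le, ← Real.rpow_neg_three hs.le]
          norm_num
  have hgauss : Real.exp (-‖z‖ ^ 2 / (4 * t)) ≤ 96 * s ^ 3 / (‖z‖ + s) ^ 3 := by
    have h := one_add_pow_three_le_mul_exp (‖z‖ / s)
    have hexp : Real.exp (-‖z‖ ^ 2 / (4 * t)) = (Real.exp ((‖z‖ / s) ^ 2 / 4))⁻¹ := by
      rw [← Real.exp_neg, hts]; congr 1; field_simp
    rw [hexp, inv_le_iff_one_le_mul₀ (Real.exp_pos _)]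
    rw [one_add_div hs.ne', div_pow, div_le_iff₀ (by positivity)] at h
    rw [div_mul_eq_mul_div, one_le_div (by positivity)]
    linarith
  unfold heatKernel
  rw [Real.rpow_neg_three (by positivity)]
  calc _ ≤ (s ^ 3)⁻¹ * (96 * s ^ 3 / (‖z‖ + s) ^ 3) :=
        mul_le_mul hprefactor hgauss (Real.exp_pos _).le (by positivity)
    _ = 96 * ((‖z‖ + s) ^ 3)⁻¹ := by field_simp

lemma heatKernel_sub_le (t : ℝ) (ht : 0 < t) {x y : EuclideanSpace ℝ (Fin 3)}
    (hy : ‖y‖ ≤ ‖x‖ / 2) :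
    heatKernel t (x - y) ≤ 768 * (‖x‖ + t ^ ((1:ℝ)/2)) ^ (-(3:ℝ)) := by
  have hs : 0 < t ^ ((1:ℝ)/2) := Real.rpow_pos_of_pos ht _
  have hxy : (‖x‖ + t ^ ((1:ℝ)/2)) / 2 ≤ ‖x - y‖ + t ^ ((1:ℝ)/2) := by
    linarith [norm_sub_norm_le x y]
  calc heatKernel t (x - y) ≤ 96 * (‖x - y‖ + t ^ ((1:ℝ)/2)) ^ (-(3:ℝ)) := heatKernel_le t ht _
    _ ≤ 96 * ((‖x‖ + t ^ ((1:ℝ)/2)) / 2) ^ (-(3:ℝ)) := by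
        gcongr 96 * ?_
        exact Real.rpow_le_rpow_of_nonpos (by positivity) hxy (by norm_num)
    _ = 768 * (‖x‖ + t ^ ((1:ℝ)/2)) ^ (-(3:ℝ)) := by
        rw [Real.rpow_neg_three (by positivity), Real.rpow_neg_three (by positivity)]
        field_simp
        ring

lemma setIntegral_norm_le_eLpNorm_mul_measure_rpow {α E : Type*} [MeasurableSpace α]
    [NormedAddCommGroup E] {μ : Measure α} {p : ℝ≥0∞} {f : α → E} {s : Set α}
    (hp : 1 ≤ p) (hf : MemLp f p μ) (hs : μ s ≠ ∞) :
    ∫ y in s, ‖f y‖ ∂μ ≤ (eLpNorm f p μ).toReal * (μ s).toReal ^ (1 - 1 / p.toReal) := by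
  have hfs : AEStronglyMeasurable f (μ.restrict s) := hf.aestronglyMeasurable.restrict
  have hHolder : eLpNorm f 1 (μ.restrict s) ≤ eLpNorm f p μ * μ s ^ (1 - 1 / p.toReal) := by
    calc eLpNorm f 1 (μ.restrict s)
        ≤ eLpNorm f p (μ.restrict s) *
            μ.restrict s Set.univ ^ (1 / (1 : ℝ≥0∞).toReal - 1 / p.toReal) :=
          eLpNorm_le_eLpNorm_mul_rpow_measure_univ hp hfs
      _ ≤ eLpNorm f p μ * μ s ^ (1 - 1 / p.toReal) := by
          rw [Measure.restrict_apply_univ, ENNReal.toReal_one, div_one]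
          gcongr
          exact Measure.restrict_le_self
  have hfin : eLpNorm f p μ * μ s ^ (1 - 1 / p.toReal) ≠ ∞ := by
    refine ENNReal.mul_ne_top hf.eLpNorm_ne_top (ENNReal.rpow_ne_top_of_nonneg ?_ hs)
    rcases eq_or_ne p ∞ with rfl | hp_top
    · simp
    have hp_real : 1 ≤ p.toReal := by
      simpa using ENNReal.toReal_mono hp_top hp
    exact sub_nonneg.2 (div_le_one_of_le₀ hp_real (by linarith))
  calc ∫ y in s, ‖f y‖ ∂μ = (eLpNorm f 1 (μ.restrict s)).toReal := by
        rw [integral_norm_eq_lintegral_enorm hfs, eLpNorm_one_eq_lintegral_enorm]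
    _ ≤ (eLpNorm f p μ * μ s ^ (1 - 1 / p.toReal)).toReal := ENNReal.toReal_mono hfin hHolder
    _ = _ := by rw [ENNReal.toReal_mul, ENNReal.toReal_rpow]

theorem stmt_6 (R₀ : ℝ) (hR₀ : 0 < R₀) :
    ∃ c > 0, ∀ v₀ : EuclideanSpace ℝ (Fin 3) → EuclideanSpace ℝ (Fin 3),
      MemLp v₀ 2 volume →
      ∀ t : ℝ, 0 < t → ∀ x : EuclideanSpace ℝ (Fin 3), 2 * R₀ < ‖x‖ →
        (∫ y in Metric.ball (0 : EuclideanSpace ℝ (Fin 3)) R₀,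
            heatKernel t (x - y) * ‖v₀ y‖) ≤
          c * (eLpNorm v₀ 2 volume).toReal * (‖x‖ + t ^ ((1:ℝ)/2)) ^ (-(3:ℝ)) := by
  set B := Metric.ball (0 : EuclideanSpace ℝ (Fin 3)) R₀
  have hB : volume B ≠ ∞ := measure_ball_lt_top.ne
  have hB_pos : 0 < (volume B).toReal :=
    ENNReal.toReal_pos (Metric.measure_ball_pos volume _ hR₀).ne' hB
  refine ⟨768 * (volume B).toReal ^ ((1:ℝ)/2), by positivity, ?_⟩
  intro v₀ hv₀ t ht x hx
  set A := 768 * (‖x‖ + t ^ ((1:ℝ)/2)) ^ (-(3:ℝ))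
  have hA : 0 ≤ A := by positivity
  have hkernel : ∀ y ∈ B, heatKernel t (x - y) ≤ A := fun y hy =>
    heatKernel_sub_le t ht (by linarith [mem_ball_zero_iff.mp hy])
  have hv_int : IntegrableOn (fun y => ‖v₀ y‖) B :=
    haveI : Fact (volume B < ∞) := ⟨hB.lt_top⟩
    ((hv₀.restrict B).integrable one_le_two).norm
  calc ∫ y in B, heatKernel t (x - y) * ‖v₀ y‖
      ≤ ∫ y in B, A * ‖v₀ y‖ :=
        setIntegral_mono_of_nonneg (fun y _ => by unfold heatKernel; positivity)
          (fun y hy => by gcongr; exact hkernel y hy) (hv_int.const_mul A)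
    _ = A * ∫ y in B, ‖v₀ y‖ := integral_const_mul A _
    _ ≤ A * ((eLpNorm v₀ 2 volume).toReal *
          (volume B).toReal ^ (1 - 1 / (2 : ℝ≥0∞).toReal)) :=
        mul_le_mul_of_nonneg_left
          (setIntegral_norm_le_eLpNorm_mul_measure_rpow one_le_two hv₀ hB) hA
    _ = _ := by norm_num [A]; ring
end

section
/- Let θ₀ ∈ L¹(ℝ³) and define θ(t,x) := ∫_{ℝ³} H(t, x-y) θ₀(y) dy for t > 0 and x ∈ ℝ³. Then for every q ∈ (1, ∞] and every λ ∈ (0,1] there exists a constant c > 0, independent of θ₀, such that for all t, s > 0, setting ξ := min{s,t}, ‖θ(t, ·) - θ(s, ·)‖_{L^q(ℝ³)} ≤ c ξ^{-λ - (3/2)(1 - 1/q)} |t - s|^λ ‖θ₀‖_{L¹}. -/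
/-!
`θ(t) - θ(s)` is the convolution of `θ₀` with `H(t) - H(s)`, so Young's inequality
`‖K ⋆ f‖_q ≤ ‖K‖_q ‖f‖_1` reduces the claim to a bound on the kernel. For `s ≤ t ≤ 2s` the mean
value theorem in time, with `|∂ₜH(t, z)| ≤ 2 (4π)^(-3/2) t^(-5/2) e^(-|z|²/(8t))`, dominates
`H(t) - H(s)` by a Gaussian whose `L^q` norm is `≲ s^(-3/2 (1 - 1/q)) (t - s)/s`; for `t ≥ 2s`
the triangle inequality gives `≲ s^(-3/2 (1 - 1/q))`. As `(t - s)/s ≤ 1` in the first case and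
`≥ 1` in the second, both are `≲ s^(-3/2 (1 - 1/q)) ((t - s)/s)^λ`.
-/

open MeasureTheory ENNReal

open Real

lemma one_div_toReal_le_one {q : ℝ≥0∞} (hq : 1 ≤ q) : 1 / q.toReal ≤ 1 := by
  rcases eq_or_ne q ∞ with rfl | hq_top
  · simp
  · exact div_le_one_of_le₀ (by simpa using toReal_mono hq_top hq) toReal_nonneg

/-- Hölder's inequality for the measure `φ μ`, with exponents `p` and `p / (p - 1)`. -/
lemma lintegral_mul_rpow_le {α : Type*} [MeasurableSpace α] {μ : Measure α} {p : ℝ} (hp : 1 ≤ p)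
    {g φ : α → ℝ≥0∞} (hg : AEMeasurable g μ) (hφ : AEMeasurable φ μ) :
    (∫⁻ y, g y * φ y ∂μ) ^ p ≤ (∫⁻ y, g y ^ p * φ y ∂μ) * (∫⁻ y, φ y ∂μ) ^ (p - 1) := by
  have hp0 : 0 < p := zero_lt_one.trans_le hp
  have hexp : 1 / p + (1 - 1 / p) = 1 := by ring
  have hholder := lintegral_mul_norm_pow_le ((hg.pow_const p).mul hφ) hφ (by positivity)
    (sub_nonneg.2 ((div_le_one hp0).2 hp)) hexp
  have hintegrand : ∀ y, (g y ^ p * φ y) ^ (1 / p) * φ y ^ (1 - 1 / p) = g y * φ y := fun y => by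
    rw [ENNReal.mul_rpow_of_nonneg _ _ (by positivity), ← ENNReal.rpow_mul,
      mul_one_div_cancel hp0.ne', ENNReal.rpow_one, mul_assoc,
      ← ENNReal.rpow_add_of_nonneg _ _ (by positivity) (sub_nonneg.2 ((div_le_one hp0).2 hp)),
      hexp, ENNReal.rpow_one]
  simp only [Pi.mul_apply, hintegrand] at hholder
  calc (∫⁻ y, g y * φ y ∂μ) ^ p
      ≤ ((∫⁻ y, g y ^ p * φ y ∂μ) ^ (1 / p) * (∫⁻ y, φ y ∂μ) ^ (1 - 1 / p)) ^ p := by gcongr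
    _ = (∫⁻ y, g y ^ p * φ y ∂μ) * (∫⁻ y, φ y ∂μ) ^ (p - 1) := by
      rw [ENNReal.mul_rpow_of_nonneg _ _ hp0.le, ← ENNReal.rpow_mul, ← ENNReal.rpow_mul,
        one_div_mul_cancel hp0.ne', ENNReal.rpow_one]
      congr 2
      field_simp

section Young

variable {G : Type*} [MeasurableSpace G] [AddGroup G] [MeasurableAdd₂ G] [MeasurableNeg G]
  {μ : Measure G} [SFinite μ] [μ.IsAddRightInvariant]

lemma lintegral_rpow_lintegral_sub_mul_le {p : ℝ} (hp : 1 ≤ p) {g φ : G → ℝ≥0∞}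
    (hg : AEMeasurable g μ) (hφ : AEMeasurable φ μ) :
    ∫⁻ x, (∫⁻ y, g (x - y) * φ y ∂μ) ^ p ∂μ ≤ (∫⁻ z, g z ^ p ∂μ) * (∫⁻ y, φ y ∂μ) ^ p := by
  have hprod : AEMeasurable (fun z : G × G => g (z.1 - z.2) ^ p * φ z.2) (μ.prod μ) :=
    ((hg.comp_quasiMeasurePreserving
      (quasiMeasurePreserving_sub_of_right_invariant μ μ)).pow_const p).mul hφ.comp_snd
  calc ∫⁻ x, (∫⁻ y, g (x - y) * φ y ∂μ) ^ p ∂μ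
      ≤ ∫⁻ x, (∫⁻ y, g (x - y) ^ p * φ y ∂μ) * (∫⁻ y, φ y ∂μ) ^ (p - 1) ∂μ :=
        lintegral_mono fun x => lintegral_mul_rpow_le hp
          (hg.comp_quasiMeasurePreserving (quasiMeasurePreserving_sub_left_of_right_invariant μ x)) hφ
    _ = (∫⁻ y, ∫⁻ x, g (x - y) ^ p * φ y ∂μ ∂μ) * (∫⁻ y, φ y ∂μ) ^ (p - 1) := by
        rw [lintegral_mul_const'' _ hprod.lintegral_prod_right', lintegral_lintegral_swap hprod]
    _ = (∫⁻ z, g z ^ p ∂μ) * (∫⁻ y, φ y ∂μ) ^ (1 + (p - 1)) := by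
        have htranslate : ∀ y, ∫⁻ x, g (x - y) ^ p * φ y ∂μ = (∫⁻ z, g z ^ p ∂μ) * φ y :=
          fun y => by
            rw [lintegral_sub_right_eq_self (fun z => g z ^ p * φ y),
              lintegral_mul_const'' _ (hg.pow_const p)]
        simp_rw [htranslate]
        rw [lintegral_const_mul'' _ hφ, ENNReal.rpow_add_of_nonneg _ _ zero_le_one (by linarith),
          ENNReal.rpow_one, mul_assoc]
    _ = (∫⁻ z, g z ^ p ∂μ) * (∫⁻ y, φ y ∂μ) ^ p := by rw [add_sub_cancel]

theorem eLpNorm_integral_sub_mul_le {p : ℝ≥0∞} (hp : 1 ≤ p) {K f : G → ℝ}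
    (hK : AEStronglyMeasurable K μ) (hf : AEStronglyMeasurable f μ) :
    eLpNorm (fun x => ∫ y, K (x - y) * f y ∂μ) p μ ≤ eLpNorm K p μ * eLpNorm f 1 μ := by
  have hpointwise : ∀ x, ‖∫ y, K (x - y) * f y ∂μ‖ₑ ≤ ∫⁻ y, ‖K (x - y)‖ₑ * ‖f y‖ₑ ∂μ :=
    fun x => (enorm_integral_le_lintegral_enorm _).trans_eq (by simp only [enorm_mul])
  rw [eLpNorm_one_eq_lintegral_enorm]
  rcases eq_or_ne p ∞ with rfl | hp_top
  · simp only [eLpNorm_exponent_top]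
    refine essSup_le_of_ae_le _ (ae_of_all _ fun x => (hpointwise x).trans ?_)
    calc ∫⁻ y, ‖K (x - y)‖ₑ * ‖f y‖ₑ ∂μ ≤ ∫⁻ y, eLpNormEssSup K μ * ‖f y‖ₑ ∂μ := by
          refine lintegral_mono_ae ?_
          filter_upwards [(quasiMeasurePreserving_sub_left_of_right_invariant μ x).ae
            (ae_le_eLpNormEssSup (f := K))] with y hy
          gcongr
      _ = eLpNormEssSup K μ * ∫⁻ y, ‖f y‖ₑ ∂μ := lintegral_const_mul'' _ hf.enorm
  · have hp0 : p ≠ 0 := (zero_lt_one.trans_le hp).ne'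
    have hr : 1 ≤ p.toReal := by simpa using toReal_mono hp_top hp
    have hr0 : 0 < p.toReal := zero_lt_one.trans_le hr
    simp only [eLpNorm_eq_lintegral_rpow_enorm_toReal hp0 hp_top]
    calc (∫⁻ x, ‖∫ y, K (x - y) * f y ∂μ‖ₑ ^ p.toReal ∂μ) ^ (1 / p.toReal)
        ≤ (∫⁻ x, (∫⁻ y, ‖K (x - y)‖ₑ * ‖f y‖ₑ ∂μ) ^ p.toReal ∂μ) ^ (1 / p.toReal) := by
          gcongr with x
          exact hpointwise x
      _ ≤ ((∫⁻ z, ‖K z‖ₑ ^ p.toReal ∂μ) * (∫⁻ y, ‖f y‖ₑ ∂μ) ^ p.toReal) ^ (1 / p.toReal) := by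
          gcongr
          exact lintegral_rpow_lintegral_sub_mul_le hr hK.enorm hf.enorm
      _ = (∫⁻ z, ‖K z‖ₑ ^ p.toReal ∂μ) ^ (1 / p.toReal) * ∫⁻ y, ‖f y‖ₑ ∂μ := by
          rw [ENNReal.mul_rpow_of_nonneg _ _ (by positivity), ← ENNReal.rpow_mul,
            mul_one_div_cancel hr0.ne', ENNReal.rpow_one]

end Young

section Gaussian

variable {V : Type*} [NormedAddCommGroup V] [InnerProductSpace ℝ V] [FiniteDimensional ℝ V]
  [MeasurableSpace V] [BorelSpace V]

lemma lintegral_exp_neg_sq_norm_div {b : ℝ} (hb : 0 < b) :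
    ∫⁻ z : V, ENNReal.ofReal (exp (-‖z‖ ^ 2 / b)) =
      ENNReal.ofReal ((π * b) ^ (Module.finrank ℝ V / 2 : ℝ)) := by
  have hintegral : ∫ z : V, exp (-‖z‖ ^ 2 / b) = (π * b) ^ (Module.finrank ℝ V / 2 : ℝ) := by
    have h := GaussianFourier.integral_rexp_neg_mul_sq_norm (V := V) (inv_pos.2 hb)
    simp only [div_inv_eq_mul, neg_mul, inv_mul_eq_div] at h
    simpa only [neg_div] using h
  rw [← hintegral, ofReal_integral_eq_lintegral_ofReal _ (ae_of_all _ fun z => (exp_pos _).le)]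
  refine Integrable.of_integral_ne_zero ?_
  rw [hintegral]
  positivity

/-- For `q = ∞` the exponent is `d / 2 * (1 / 0) = 0`, since `∞.toReal = 0`. -/
lemma eLpNorm_exp_neg_sq_norm_div_le {q : ℝ≥0∞} (hq : 1 ≤ q) {b : ℝ} (hb : 0 < b) :
    eLpNorm (fun z : V => exp (-‖z‖ ^ 2 / b)) q volume ≤
      ENNReal.ofReal ((π * b) ^ (Module.finrank ℝ V / 2 * (1 / q.toReal))) := by
  rcases eq_or_ne q ∞ with rfl | hq_top
  · rw [eLpNorm_exponent_top, toReal_top, _root_.div_zero, mul_zero, Real.rpow_zero]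
    refine eLpNormEssSup_le_of_ae_bound (ae_of_all _ fun z => ?_)
    rw [Real.norm_of_nonneg (exp_pos _).le, exp_le_one_iff, neg_div]
    exact neg_nonpos.2 (by positivity)
  have hr : 1 ≤ q.toReal := by simpa using toReal_mono hq_top hq
  have hr0 : 0 < q.toReal := zero_lt_one.trans_le hr
  have hpow : ∀ z : V, ‖exp (-‖z‖ ^ 2 / b)‖ₑ ^ q.toReal =
      ENNReal.ofReal (exp (-‖z‖ ^ 2 / (b / q.toReal))) := fun z => by
    rw [Real.enorm_eq_ofReal (exp_pos _).le, ENNReal.ofReal_rpow_of_nonneg (exp_pos _).le hr0.le,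
      ← Real.exp_mul, div_div_eq_mul_div, mul_div_right_comm]
  rw [eLpNorm_eq_lintegral_rpow_enorm_toReal (zero_lt_one.trans_le hq).ne' hq_top]
  simp only [hpow]
  rw [lintegral_exp_neg_sq_norm_div (by positivity), ENNReal.ofReal_rpow_of_nonneg (by positivity)
    (by positivity), ← Real.rpow_mul (by positivity)]
  gcongr
  exact div_le_self (by positivity) hr

lemma eLpNorm_le_of_abs_le_mul_exp {K : V → ℝ} {A b : ℝ} (hb : 0 < b)
    (hK : ∀ z, |K z| ≤ A * exp (-‖z‖ ^ 2 / b)) {q : ℝ≥0∞} (hq : 1 ≤ q) :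
    eLpNorm K q volume ≤
      ENNReal.ofReal (A * (π * b) ^ (Module.finrank ℝ V / 2 * (1 / q.toReal))) := by
  have hA : 0 ≤ A := nonneg_of_mul_nonneg_left ((abs_nonneg _).trans (hK 0)) (exp_pos _)
  calc eLpNorm K q volume ≤ eLpNorm (A • fun z : V => exp (-‖z‖ ^ 2 / b)) q volume :=
        eLpNorm_mono_real fun z => hK z
    _ = ENNReal.ofReal A * eLpNorm (fun z : V => exp (-‖z‖ ^ 2 / b)) q volume := by
        rw [eLpNorm_const_smul, Real.enorm_eq_ofReal hA]
    _ ≤ ENNReal.ofReal A *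
          ENNReal.ofReal ((π * b) ^ (Module.finrank ℝ V / 2 * (1 / q.toReal))) := by
        gcongr
        exact eLpNorm_exp_neg_sq_norm_div_le hq hb
    _ = ENNReal.ofReal (A * (π * b) ^ (Module.finrank ℝ V / 2 * (1 / q.toReal))) :=
        (ofReal_mul hA).symm

end Gaussian

local notation "ℝ³" => EuclideanSpace ℝ (Fin 3)

lemma continuous_heatKernel (u : ℝ) : Continuous (heatKernel u) := by
  unfold heatKernel
  fun_prop

lemma heatKernel_nonneg {u : ℝ} (hu : 0 ≤ u) (z : ℝ³) : 0 ≤ heatKernel u z := by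
  unfold heatKernel
  positivity

lemma heatKernel_le_s11 {u : ℝ} (hu : 0 ≤ u) (z : ℝ³) : heatKernel u z ≤ (4 * π * u) ^ (-(3:ℝ)/2) := by
  refine mul_le_of_le_one_right (by positivity) (exp_le_one_iff.2 ?_)
  rw [neg_div]
  exact neg_nonpos.2 (by positivity)

lemma eLpNorm_heatKernel_le {q : ℝ≥0∞} (hq : 1 ≤ q) {u : ℝ} (hu : 0 < u) :
    eLpNorm (heatKernel u) q volume ≤
      ENNReal.ofReal ((4 * π * u) ^ (-(3/2 * (1 - 1 / q.toReal)))) := by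
  refine (eLpNorm_le_of_abs_le_mul_exp (by positivity : 0 < 4 * u)
    (fun z => (abs_of_nonneg (heatKernel_nonneg hu.le z)).le) hq).trans_eq ?_
  rw [finrank_euclideanSpace_fin, show π * (4 * u) = 4 * π * u by ring,
    ← Real.rpow_add (by positivity)]
  congr 2
  push_cast
  ring

lemma hasDerivAt_heatKernel (z : ℝ³) {u : ℝ} (hu : 0 < u) :
    HasDerivAt (fun v => heatKernel v z) (heatKernel u z * ((‖z‖ ^ 2 / (4 * u) - 3/2) / u)) u := by
  have hpow : HasDerivAt (fun v : ℝ => (4 * π * v) ^ (-(3:ℝ)/2))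
      (4 * π * 1 * (-(3:ℝ)/2) * (4 * π * u) ^ (-(3:ℝ)/2 - 1)) u :=
    ((hasDerivAt_id' u).const_mul (4 * π)).rpow_const (Or.inl (by positivity))
  have hexp : HasDerivAt (fun v : ℝ => exp (-‖z‖ ^ 2 / (4 * v)))
      (exp (-‖z‖ ^ 2 / (4 * u)) * ((0 * (4 * u) - -‖z‖ ^ 2 * (4 * 1)) / (4 * u) ^ 2)) u :=
    ((hasDerivAt_const u (-‖z‖ ^ 2)).div ((hasDerivAt_id' u).const_mul 4) (by positivity)).exp
  refine (hpow.mul hexp).congr_deriv ?_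
  rw [Real.rpow_sub_one (by positivity)]
  unfold heatKernel
  field_simp
  ring

lemma add_three_halves_mul_exp_neg_le (a : ℝ) :
    (a + 3/2) * exp (-a) ≤ 2 * exp (-(a / 2)) := by
  calc (a + 3/2) * exp (-a) ≤ 2 * exp (a / 2) * exp (-a) := by
        gcongr
        linarith [add_one_le_exp (a / 2)]
    _ = 2 * exp (-(a / 2)) := by
        rw [mul_assoc, ← exp_add]
        ring_nf

lemma abs_heatKernel_mul_le {u : ℝ} (hu : 0 < u) (z : ℝ³) :
    |heatKernel u z * ((‖z‖ ^ 2 / (4 * u) - 3/2) / u)| ≤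
      2 * (4 * π) ^ (-(3:ℝ)/2) * u ^ (-(5:ℝ)/2) * exp (-‖z‖ ^ 2 / (8 * u)) := by
  set a := ‖z‖ ^ 2 / (4 * u) with ha_def
  have ha : 0 ≤ a := by positivity
  have hH : heatKernel u z = (4 * π) ^ (-(3:ℝ)/2) * u ^ (-(3:ℝ)/2) * exp (-a) := by
    unfold heatKernel
    rw [Real.mul_rpow (by positivity) hu.le, neg_div (4 * u)]
  have hu52 : u ^ (-(3:ℝ)/2) / u = u ^ (-(5:ℝ)/2) := by
    rw [← Real.rpow_sub_one hu.ne']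
    norm_num
  have hexp : exp (-‖z‖ ^ 2 / (8 * u)) = exp (-(a / 2)) := by
    rw [ha_def]
    ring_nf
  calc |heatKernel u z * ((a - 3/2) / u)|
      = (4 * π) ^ (-(3:ℝ)/2) * (u ^ (-(3:ℝ)/2) / u) * (|a - 3/2| * exp (-a)) := by
        rw [hH, abs_mul, abs_div, abs_of_pos hu, abs_of_nonneg (by positivity)]
        ring
    _ ≤ (4 * π) ^ (-(3:ℝ)/2) * (u ^ (-(3:ℝ)/2) / u) * ((a + 3/2) * exp (-a)) := by
        gcongr
        exact abs_le.2 ⟨by linarith, by linarith⟩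
    _ ≤ (4 * π) ^ (-(3:ℝ)/2) * (u ^ (-(3:ℝ)/2) / u) * (2 * exp (-(a / 2))) :=
        mul_le_mul_of_nonneg_left (add_three_halves_mul_exp_neg_le a) (by positivity)
    _ = 2 * (4 * π) ^ (-(3:ℝ)/2) * u ^ (-(5:ℝ)/2) * exp (-‖z‖ ^ 2 / (8 * u)) := by
        rw [hu52, hexp]
        ring

lemma abs_heatKernel_sub_le {s t : ℝ} (hs : 0 < s) (hst : s ≤ t) (z : ℝ³) :
    |heatKernel t z - heatKernel s z| ≤
      2 * (4 * π) ^ (-(3:ℝ)/2) * s ^ (-(5:ℝ)/2) * (t - s) * exp (-‖z‖ ^ 2 / (8 * t)) := by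
  have hderiv_le : ∀ u ∈ Set.Ico s t, ‖heatKernel u z * ((‖z‖ ^ 2 / (4 * u) - 3/2) / u)‖ ≤
      2 * (4 * π) ^ (-(3:ℝ)/2) * s ^ (-(5:ℝ)/2) * exp (-‖z‖ ^ 2 / (8 * t)) := by
    rintro u ⟨hsu, hut⟩
    have hu : 0 < u := hs.trans_le hsu
    rw [Real.norm_eq_abs]
    refine (abs_heatKernel_mul_le hu z).trans ?_
    gcongr ?_ * ?_ * exp ?_
    · exact Real.rpow_le_rpow_of_nonpos hs hsu (by norm_num)
    · rw [neg_div, neg_div]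
      gcongr
  have hmvt := norm_image_sub_le_of_norm_deriv_le_segment' (f := fun v => heatKernel v z)
    (fun u hu => (hasDerivAt_heatKernel z (hs.trans_le hu.1)).hasDerivWithinAt) hderiv_le t
    ⟨hst, le_rfl⟩
  rw [Real.norm_eq_abs] at hmvt
  linarith

lemma eLpNorm_heatKernel_sub_le {q : ℝ≥0∞} (hq : 1 ≤ q) {s t : ℝ} (hs : 0 < s) (hst : s ≤ t) :
    eLpNorm (heatKernel t - heatKernel s) q volume ≤
      ENNReal.ofReal (2 * (4 * π) ^ (-(3/2 * (1 - 1 / q.toReal))) *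
        s ^ (-(3/2 * (1 - 1 / q.toReal)))) := by
  have hβ : 0 ≤ 3/2 * (1 - 1 / q.toReal) := by linarith [one_div_toReal_le_one hq]
  calc eLpNorm (heatKernel t - heatKernel s) q volume
      ≤ eLpNorm (heatKernel t) q volume + eLpNorm (heatKernel s) q volume :=
        eLpNorm_sub_le (continuous_heatKernel t).aestronglyMeasurable
          (continuous_heatKernel s).aestronglyMeasurable hq
    _ ≤ ENNReal.ofReal ((4 * π * t) ^ (-(3/2 * (1 - 1 / q.toReal)))) +
          ENNReal.ofReal ((4 * π * s) ^ (-(3/2 * (1 - 1 / q.toReal)))) :=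
        add_le_add (eLpNorm_heatKernel_le hq (hs.trans_le hst)) (eLpNorm_heatKernel_le hq hs)
    _ ≤ ENNReal.ofReal ((4 * π * s) ^ (-(3/2 * (1 - 1 / q.toReal)))) +
          ENNReal.ofReal ((4 * π * s) ^ (-(3/2 * (1 - 1 / q.toReal)))) := by
        gcongr ENNReal.ofReal ?_ + _
        exact Real.rpow_le_rpow_of_nonpos (by positivity) (by gcongr) (neg_nonpos.2 hβ)
    _ = _ := by
        rw [← ofReal_add (by positivity) (by positivity), Real.mul_rpow (by positivity) hs.le]
        ring_nf

lemma eLpNorm_heatKernel_sub_le_of_le_two_mul {q : ℝ≥0∞} (hq : 1 ≤ q) {s t : ℝ} (hs : 0 < s)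
    (hst : s ≤ t) (ht : t ≤ 2 * s) :
    eLpNorm (heatKernel t - heatKernel s) q volume ≤
      ENNReal.ofReal (2 * (4 * π) ^ (-(3:ℝ)/2) * (16 * π) ^ (3/2 * (1 / q.toReal)) *
        s ^ (-(3/2 * (1 - 1 / q.toReal))) * ((t - s) / s)) := by
  have ht0 : 0 < t := hs.trans_le hst
  refine (eLpNorm_le_of_abs_le_mul_exp (by positivity : 0 < 8 * t)
    (fun z => abs_heatKernel_sub_le hs hst z) hq).trans (ofReal_le_ofReal ?_)
  have hspow : s ^ (-(5:ℝ)/2) * s ^ (3/2 * (1 / q.toReal)) =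
      s ^ (-(3/2 * (1 - 1 / q.toReal))) / s := by
    rw [← Real.rpow_add hs, ← Real.rpow_sub_one hs.ne']
    ring_nf
  rw [finrank_euclideanSpace_fin]
  calc 2 * (4 * π) ^ (-(3:ℝ)/2) * s ^ (-(5:ℝ)/2) * (t - s) *
        (π * (8 * t)) ^ ((3:ℕ) / 2 * (1 / q.toReal))
      ≤ 2 * (4 * π) ^ (-(3:ℝ)/2) * s ^ (-(5:ℝ)/2) * (t - s) *
        ((16 * π) * s) ^ (3 / 2 * (1 / q.toReal)) := by
        push_cast
        gcongr _ * ?_ ^ _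
        nlinarith [pi_pos]
    _ = _ := by
        rw [Real.mul_rpow (by positivity) hs.le]
        linear_combination (2 * (4 * π) ^ (-(3:ℝ)/2) * (16 * π) ^ (3/2 * (1 / q.toReal)) * (t - s))
          * hspow

lemma exists_eLpNorm_heatKernel_sub_le {q : ℝ≥0∞} (hq : 1 ≤ q) {lam : ℝ}
    (hlam : lam ∈ Set.Ioc (0:ℝ) 1) :
    ∃ C > 0, ∀ s t : ℝ, 0 < s → s ≤ t →
      eLpNorm (heatKernel t - heatKernel s) q volume ≤
        ENNReal.ofReal (C * s ^ (-lam - 3/2 * (1 - 1 / q.toReal)) * (t - s) ^ lam) := by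
  set β := 3/2 * (1 - 1 / q.toReal)
  set C₁ := 2 * (4 * π) ^ (-(3:ℝ)/2) * (16 * π) ^ (3/2 * (1 / q.toReal))
  set C₂ := 2 * (4 * π) ^ (-β)
  refine ⟨C₁ + C₂, by positivity, fun s t hs hst => ?_⟩
  have hrescale : s ^ (-β) * ((t - s) / s) ^ lam = s ^ (-lam - β) * (t - s) ^ lam := by
    rw [Real.div_rpow (sub_nonneg.2 hst) hs.le, sub_eq_add_neg (-lam), Real.rpow_add hs,
      Real.rpow_neg hs.le lam]
    ring
  suffices h : eLpNorm (heatKernel t - heatKernel s) q volume ≤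
      ENNReal.ofReal ((C₁ + C₂) * s ^ (-β) * ((t - s) / s) ^ lam) by
    rwa [mul_assoc, hrescale, ← mul_assoc] at h
  rcases le_total t (2 * s) with ht | ht
  · have hx : (t - s) / s ≤ ((t - s) / s) ^ lam :=
      Real.self_le_rpow_of_le_one (div_nonneg (sub_nonneg.2 hst) hs.le)
        ((div_le_one hs).2 (by linarith)) hlam.2
    refine (eLpNorm_heatKernel_sub_le_of_le_two_mul hq hs hst ht).trans (ofReal_le_ofReal ?_)
    gcongr
    exact le_add_of_nonneg_right (by positivity)
  · have hx : 1 ≤ ((t - s) / s) ^ lam :=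
      Real.one_le_rpow ((one_le_div hs).2 (by linarith)) hlam.1.le
    refine (eLpNorm_heatKernel_sub_le hq hs hst).trans (ofReal_le_ofReal ?_)
    calc C₂ * s ^ (-β) = C₂ * s ^ (-β) * 1 := (mul_one _).symm
      _ ≤ (C₁ + C₂) * s ^ (-β) * ((t - s) / s) ^ lam := by
        gcongr
        exact le_add_of_nonneg_left (by positivity)

noncomputable def heatFlow (θ₀ : ℝ³ → ℝ) (t : ℝ) (x : ℝ³) : ℝ :=
  ∫ y, heatKernel t (x - y) * θ₀ y

lemma integrable_heatKernel_sub_mul {θ₀ : ℝ³ → ℝ} (hθ₀ : Integrable θ₀) {u : ℝ} (hu : 0 ≤ u)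
    (x : ℝ³) : Integrable (fun y => heatKernel u (x - y) * θ₀ y) :=
  hθ₀.bdd_mul ((continuous_heatKernel u).comp (continuous_sub_left x)).aestronglyMeasurable
    (ae_of_all _ fun _ => (Real.norm_of_nonneg (heatKernel_nonneg hu _)).trans_le
      (heatKernel_le_s11 hu _))

lemma heatFlow_sub_heatFlow {θ₀ : ℝ³ → ℝ} (hθ₀ : Integrable θ₀) {s t : ℝ} (hs : 0 ≤ s)
    (ht : 0 ≤ t) (x : ℝ³) :
    heatFlow θ₀ t x - heatFlow θ₀ s x = ∫ y, (heatKernel t - heatKernel s) (x - y) * θ₀ y := by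
  rw [heatFlow, heatFlow, ← integral_sub (integrable_heatKernel_sub_mul hθ₀ ht x)
    (integrable_heatKernel_sub_mul hθ₀ hs x)]
  simp only [Pi.sub_apply, sub_mul]

theorem exists_eLpNorm_heatFlow_sub_le {q : ℝ≥0∞} (hq : 1 ≤ q) {lam : ℝ}
    (hlam : lam ∈ Set.Ioc (0:ℝ) 1) :
    ∃ C > 0, ∀ θ₀ : ℝ³ → ℝ, Integrable θ₀ → ∀ s t : ℝ, 0 < s → s ≤ t →
      eLpNorm (fun x => heatFlow θ₀ t x - heatFlow θ₀ s x) q volume ≤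
        ENNReal.ofReal (C * s ^ (-lam - 3/2 * (1 - 1 / q.toReal)) * (t - s) ^ lam
          * ∫ y, |θ₀ y|) := by
  obtain ⟨C, hC, hkernel⟩ := exists_eLpNorm_heatKernel_sub_le hq hlam
  refine ⟨C, hC, fun θ₀ hθ₀ s t hs hst => ?_⟩
  simp_rw [heatFlow_sub_heatFlow hθ₀ hs.le (hs.trans_le hst).le]
  calc eLpNorm (fun x => ∫ y, (heatKernel t - heatKernel s) (x - y) * θ₀ y) q volume
      ≤ eLpNorm (heatKernel t - heatKernel s) q volume * eLpNorm θ₀ 1 volume :=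
        eLpNorm_integral_sub_mul_le hq
          ((continuous_heatKernel t).sub (continuous_heatKernel s)).aestronglyMeasurable
          hθ₀.aestronglyMeasurable
    _ ≤ ENNReal.ofReal (C * s ^ (-lam - 3/2 * (1 - 1 / q.toReal)) * (t - s) ^ lam) *
          ENNReal.ofReal (∫ y, |θ₀ y|) := by
        rw [eLpNorm_one_eq_lintegral_enorm, ← ofReal_integral_norm_eq_lintegral_enorm hθ₀]
        exact mul_le_mul_left (hkernel s t hs hst) _
    _ = _ := (ofReal_mul (by positivity)).symm

theorem stmt_11 (q : ℝ≥0∞) (hq : 1 < q) (lam : ℝ) (hlam : lam ∈ Set.Ioc (0:ℝ) 1) :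
    ∃ c > 0, ∀ θ₀ : EuclideanSpace ℝ (Fin 3) → ℝ, Integrable θ₀ volume →
      ∀ t s : ℝ, 0 < t → 0 < s →
        eLpNorm (fun x => (∫ y, heatKernel t (x - y) * θ₀ y)
            - ∫ y, heatKernel s (x - y) * θ₀ y) q volume ≤
          ENNReal.ofReal (c * (min s t) ^ (-lam - 3/2 * (1 - 1/q.toReal)) * |t - s| ^ lam
            * ∫ y, |θ₀ y|) := by
  obtain ⟨c, hc, hbound⟩ := exists_eLpNorm_heatFlow_sub_le hq.le hlam
  refine ⟨c, hc, fun θ₀ hθ₀ t s ht hs => ?_⟩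
  rcases le_total s t with hst | hts
  · rw [min_eq_left hst, abs_of_nonneg (sub_nonneg.2 hst)]
    exact hbound θ₀ hθ₀ s t hs hst
  · rw [min_eq_right hts, abs_sub_comm, abs_of_nonneg (sub_nonneg.2 hts), ← eLpNorm_neg]
    simpa only [Pi.neg_def, neg_sub, heatFlow] using hbound θ₀ hθ₀ t s ht hts
end

section
/- Define, for t > 0 and x ∈ ℝ³ with x ≠ 0, φ(t,x) := (2π^{3/2})^{-1} |x|^{-1} ∫₀^{|x|/(2√t)} e^{-ρ²} dρ, and for i,j ∈ {1,2,3} the Oseen tensor T_{ij}(t,x) := H(t,x) δ_{ij} + ∂_{x_i}∂_{x_j} φ(t,x). Then there exists a constant c > 0 such that for all t > 0, all x ∈ ℝ³ with x ≠ 0, and all i, j, |T_{ij}(t,x)| ≤ c (|x| + t^{1/2})^{-3}. -/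
open MeasureTheory

/-- The potential `φ(t,x) = (2π^{3/2})⁻¹ |x|⁻¹ ∫₀^{|x|/(2√t)} e^{-ρ²} dρ`. -/
noncomputable def oseenPhi (t : ℝ) (x : EuclideanSpace ℝ (Fin 3)) : ℝ :=
  (2 * Real.pi ^ ((3:ℝ)/2))⁻¹ * ‖x‖⁻¹ *
    ∫ ρ in Set.Ioo (0:ℝ) (‖x‖ / (2 * Real.sqrt t)), Real.exp (-ρ ^ 2)

/-- The Oseen tensor `T_{ij}(t,x) = H(t,x) δ_{ij} + ∂_{x_i}∂_{x_j} φ(t,x)`. -/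
noncomputable def oseenT (t : ℝ) (x : EuclideanSpace ℝ (Fin 3)) (i j : Fin 3) : ℝ :=
  heatKernel t x * (if i = j then 1 else 0) +
    fderiv ℝ (fun z => fderiv ℝ (fun w => oseenPhi t w) z (EuclideanSpace.single j 1))
      x (EuclideanSpace.single i 1)

/-! Write `u = |x|/(2√t)`, `E(u) = ∫₀ᵘ e^{-ρ²} dρ` and `D(u) = E(u) - u e^{-u²}`.
Since `φ(t,x)` is a function `g(|x|²)`, its Hessian is `2 g'(|x|²) δᵢⱼ + 4 g''(|x|²) xᵢ xⱼ`,
and together with the heat kernel this gives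
`Tᵢⱼ = c |x|⁻³ ((2u³e^{-u²} - D) δᵢⱼ + (xᵢxⱼ/|x|²)(3D - 2u³e^{-u²}))`.
Both `D(u)` and `u³e^{-u²}` lie between `0` and `min(1, u³)`, so the bracket is `O(u³/(1+u)³)`,
which is exactly `|Tᵢⱼ| ≲ (|x| + 2√t)⁻³`. -/

open Real

noncomputable def gaussPartial (u : ℝ) : ℝ := ∫ ρ in Set.Ioo 0 u, exp (-ρ ^ 2)

noncomputable def gaussDefect (u : ℝ) : ℝ := gaussPartial u - u * exp (-u ^ 2)

lemma continuous_exp_neg_sq : Continuous fun ρ : ℝ => exp (-ρ ^ 2) := by fun_prop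

lemma gaussPartial_eq_intervalIntegral {u : ℝ} (hu : 0 ≤ u) :
    gaussPartial u = ∫ ρ in (0:ℝ)..u, exp (-ρ ^ 2) := by
  rw [intervalIntegral.integral_of_le hu, integral_Ioc_eq_integral_Ioo, gaussPartial]

lemma hasDerivAt_gaussPartial {u : ℝ} (hu : 0 < u) :
    HasDerivAt gaussPartial (exp (-u ^ 2)) u := by
  have h := intervalIntegral.integral_hasDerivAt_right
    (continuous_exp_neg_sq.intervalIntegrable 0 u)
    (continuous_exp_neg_sq.stronglyMeasurableAtFilter _ _) continuous_exp_neg_sq.continuousAt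
  refine h.congr_of_eventuallyEq ?_
  filter_upwards [Ioi_mem_nhds hu] with v hv
  exact gaussPartial_eq_intervalIntegral (le_of_lt hv)

lemma gaussPartial_le_one (u : ℝ) : gaussPartial u ≤ 1 := by
  have hle : gaussPartial u ≤ ∫ ρ in Set.Ioi 0, exp (-1 * ρ ^ 2) := by
    simpa [gaussPartial] using setIntegral_mono_set (s := Set.Ioo 0 u)
      (integrable_exp_neg_mul_sq one_pos).integrableOn
      (.of_forall fun ρ => (exp_pos _).le) Set.Ioo_subset_Ioi_self.eventuallyLE
  have hpi : √π ≤ 2 := sqrt_le_iff.2 ⟨zero_le_two, by linarith [pi_le_four]⟩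
  rw [integral_gaussian_Ioi, div_one] at hle
  linarith

lemma gaussPartial_le_self {u : ℝ} (hu : 0 ≤ u) : gaussPartial u ≤ u := by
  rw [gaussPartial_eq_intervalIntegral hu]
  calc ∫ ρ in (0:ℝ)..u, exp (-ρ ^ 2) ≤ ∫ _ in (0:ℝ)..u, (1:ℝ) :=
        intervalIntegral.integral_mono_on hu (continuous_exp_neg_sq.intervalIntegrable 0 u)
          intervalIntegrable_const fun ρ _ => exp_le_one_iff.2 (by nlinarith [sq_nonneg ρ])
    _ = u := by simp

lemma mul_exp_neg_sq_le_gaussPartial {u : ℝ} (hu : 0 ≤ u) :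
    u * exp (-u ^ 2) ≤ gaussPartial u := by
  rw [gaussPartial_eq_intervalIntegral hu]
  calc u * exp (-u ^ 2) = ∫ _ in (0:ℝ)..u, exp (-u ^ 2) := by simp
    _ ≤ ∫ ρ in (0:ℝ)..u, exp (-ρ ^ 2) :=
        intervalIntegral.integral_mono_on hu intervalIntegrable_const
          (continuous_exp_neg_sq.intervalIntegrable 0 u)
          fun ρ hρ => exp_le_exp.2 (by nlinarith [hρ.1, hρ.2])

lemma hasDerivAt_gaussDefect {u : ℝ} (hu : 0 < u) :
    HasDerivAt gaussDefect (2 * u ^ 2 * exp (-u ^ 2)) u := by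
  have hexp : HasDerivAt (fun v => exp (-v ^ 2)) (exp (-u ^ 2) * -(2 * u)) u := by
    simpa using (hasDerivAt_pow 2 u).neg.exp
  exact ((hasDerivAt_gaussPartial hu).sub ((hasDerivAt_id' u).mul hexp)).congr_deriv (by ring)

lemma gaussDefect_nonneg {u : ℝ} (hu : 0 ≤ u) : 0 ≤ gaussDefect u :=
  sub_nonneg.2 (mul_exp_neg_sq_le_gaussPartial hu)

lemma gaussDefect_le_one {u : ℝ} (hu : 0 ≤ u) : gaussDefect u ≤ 1 := by
  have hE := gaussPartial_le_one u
  have hue : 0 ≤ u * exp (-u ^ 2) := by positivity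
  unfold gaussDefect
  linarith

lemma gaussDefect_le_pow_three {u : ℝ} (hu : 0 ≤ u) : gaussDefect u ≤ u ^ 3 := by
  have h1 : 1 - exp (-u ^ 2) ≤ u ^ 2 := by linarith [add_one_le_exp (-u ^ 2)]
  have h2 := gaussPartial_le_self hu
  unfold gaussDefect
  nlinarith [mul_le_mul_of_nonneg_left h1 hu]

lemma pow_three_mul_exp_neg_sq_le_one {u : ℝ} (hu : 0 ≤ u) : u ^ 3 * exp (-u ^ 2) ≤ 1 := by
  have h1 : u ≤ exp (u ^ 2 / 3) := by
    nlinarith [add_one_le_exp (u ^ 2 / 3), sq_nonneg (u - 3 / 2)]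
  have h2 : u ^ 3 ≤ exp (u ^ 2) := by
    calc u ^ 3 ≤ exp (u ^ 2 / 3) ^ 3 := pow_le_pow_left₀ hu h1 3
      _ = exp (u ^ 2) := by rw [← exp_nat_mul]; ring_nf
  rw [exp_neg, ← div_eq_mul_inv, div_le_one (exp_pos _)]
  exact h2

lemma one_add_pow_three_mul_abs_le {u D m δ p : ℝ} (hu : 0 ≤ u) (hD : 0 ≤ D) (hm : 0 ≤ m)
    (hD1 : D ≤ 1) (hm1 : m ≤ 1) (hD3 : D ≤ u ^ 3) (hm3 : m ≤ u ^ 3) (hδ : |δ| ≤ 1) (hp : |p| ≤ 1) :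
    (1 + u) ^ 3 * |(2 * m - D) * δ + p * (3 * D - 2 * m)| ≤ 64 * u ^ 3 := by
  have hB : |(2 * m - D) * δ + p * (3 * D - 2 * m)| ≤ 4 * (D + m) :=
    calc _ ≤ |2 * m - D| * |δ| + |p| * |3 * D - 2 * m| := by
          rw [← abs_mul, ← abs_mul]; exact abs_add_le _ _
      _ ≤ |2 * m - D| + |3 * D - 2 * m| := by
          gcongr
          · exact mul_le_of_le_one_right (abs_nonneg _) hδ
          · exact mul_le_of_le_one_left (abs_nonneg _) hp
      _ ≤ (2 * m + D) + (3 * D + 2 * m) := by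
          gcongr <;> exact abs_le.2 ⟨by linarith, by linarith⟩
      _ = 4 * (D + m) := by ring
  rcases le_total u 1 with hu1 | hu1
  · have : (1 + u) ^ 3 ≤ 2 ^ 3 := pow_le_pow_left₀ (by linarith) (by linarith) 3
    calc _ ≤ 2 ^ 3 * (8 * u ^ 3) := by gcongr; linarith
      _ = 64 * u ^ 3 := by ring
  · have : (1 + u) ^ 3 ≤ (2 * u) ^ 3 := pow_le_pow_left₀ (by linarith) (by linarith) 3
    calc _ ≤ (2 * u) ^ 3 * 8 := by gcongr; linarith
      _ = 64 * u ^ 3 := by ring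

section
variable {F : Type*} [NormedAddCommGroup F] [InnerProductSpace ℝ F]
open InnerProductSpace

lemma fderiv_fderiv_comp_norm_sq {g g' : ℝ → ℝ} {g'' : ℝ} {x : F}
    (hg : ∀ s > 0, HasDerivAt g (g' s) s) (hg' : HasDerivAt g' g'' (‖x‖ ^ 2)) (hx : x ≠ 0)
    (v w : F) :
    fderiv ℝ (fun z => fderiv ℝ (fun y => g (‖y‖ ^ 2)) z v) x w
      = 2 * g' (‖x‖ ^ 2) * ⟪v, w⟫_ℝ + 4 * g'' * ⟪x, v⟫_ℝ * ⟪x, w⟫_ℝ := by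
  have hsq (z : F) := (hasStrictFDerivAt_norm_sq z).hasFDerivAt
  have hfirst : (fun z => fderiv ℝ (fun y => g (‖y‖ ^ 2)) z v)
      =ᶠ[nhds x] fun z => g' (‖z‖ ^ 2) * (2 * innerSL ℝ v z) := by
    filter_upwards [isOpen_ne.mem_nhds hx] with z hz
    have hd : HasFDerivAt (fun y => g (‖y‖ ^ 2)) _ z :=
      (hg _ (by positivity)).comp_hasFDerivAt z (hsq z)
    simp [hd.fderiv, real_inner_comm]
  have hsecond : HasFDerivAt (fun z => g' (‖z‖ ^ 2) * (2 * innerSL ℝ v z)) _ x :=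
    (hg'.comp_hasFDerivAt x (hsq x)).mul ((innerSL ℝ v).hasFDerivAt.const_mul 2)
  rw [hfirst.fderiv_eq, hsecond.fderiv]
  simp [real_inner_comm]
  ring
end

noncomputable def oseenConst : ℝ := (2 * π ^ ((3:ℝ)/2))⁻¹

noncomputable def oseenProfile (a s : ℝ) : ℝ := oseenConst * ((√s)⁻¹ * gaussPartial (√s / a))

noncomputable def oseenProfileDeriv (a s : ℝ) : ℝ :=
  -(oseenConst / 2) * gaussDefect (√s / a) / √s ^ 3

noncomputable def oseenProfileDeriv2 (a s : ℝ) : ℝ :=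
  oseenConst / 4 * (3 * gaussDefect (√s / a) - 2 * (√s / a) ^ 3 * exp (-(√s / a) ^ 2)) / √s ^ 5

lemma hasDerivAt_oseenProfile {a s : ℝ} (ha : 0 < a) (hs : 0 < s) :
    HasDerivAt (oseenProfile a) (oseenProfileDeriv a s) s := by
  have hr : 0 < √s := sqrt_pos.2 hs
  have hsqrt := hasDerivAt_sqrt hs.ne'
  have hE := (hasDerivAt_gaussPartial (by positivity)).comp s (hsqrt.div_const a)
  refine (((hsqrt.inv hr.ne').mul hE).const_mul oseenConst).congr_deriv ?_
  simp only [oseenProfileDeriv, gaussDefect, Function.comp_apply, Pi.inv_apply]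
  field_simp
  ring

lemma hasDerivAt_oseenProfileDeriv {a s : ℝ} (ha : 0 < a) (hs : 0 < s) :
    HasDerivAt (oseenProfileDeriv a) (oseenProfileDeriv2 a s) s := by
  have hr : 0 < √s := sqrt_pos.2 hs
  have hsqrt := hasDerivAt_sqrt hs.ne'
  have hD := (hasDerivAt_gaussDefect (by positivity)).comp s (hsqrt.div_const a)
  refine ((hD.const_mul (-(oseenConst / 2))).div (hsqrt.pow 3)
    (pow_ne_zero 3 hr.ne')).congr_deriv ?_
  simp only [oseenProfileDeriv2, Function.comp_apply, Pi.pow_apply]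
  field_simp
  ring

lemma oseenConst_pos : 0 < oseenConst := by
  unfold oseenConst
  positivity

lemma oseenPhi_eq_oseenProfile (t : ℝ) :
    (fun w => oseenPhi t w) = fun w => oseenProfile (2 * √t) (‖w‖ ^ 2) := by
  funext w
  rw [oseenPhi, oseenProfile, gaussPartial, sqrt_sq (norm_nonneg w), oseenConst, mul_assoc]

lemma heatKernel_eq {t : ℝ} (ht : 0 < t) (x : EuclideanSpace ℝ (Fin 3)) :
    heatKernel t x = 2 * oseenConst / (2 * √t) ^ 3 * exp (-(‖x‖ / (2 * √t)) ^ 2) := by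
  have hsq : (2 * √t) ^ 2 = 4 * t := by rw [mul_pow, sq_sqrt ht.le]; ring
  have hcoef : (4 * π * t) ^ (-(3:ℝ) / 2) = 2 * oseenConst / (2 * √t) ^ 3 := by
    rw [show 4 * π * t = π * (2 * √t) ^ 2 by rw [hsq]; ring,
      show -(3:ℝ) / 2 = -(3 / 2) by ring, rpow_neg (by positivity),
      mul_rpow pi_pos.le (by positivity), ← rpow_natCast (2 * √t) 2, ← rpow_mul (by positivity),
      show ((2:ℕ):ℝ) * (3 / 2) = ((3:ℕ):ℝ) by norm_num, rpow_natCast, oseenConst]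
    field_simp
  rw [heatKernel, hcoef, div_pow, hsq, neg_div]

lemma oseenT_eq {t : ℝ} (ht : 0 < t) {x : EuclideanSpace ℝ (Fin 3)} (hx : x ≠ 0) (i j : Fin 3) :
    let u := ‖x‖ / (2 * √t)
    oseenT t x i j = oseenConst / ‖x‖ ^ 3 *
      ((2 * u ^ 3 * exp (-u ^ 2) - gaussDefect u) * (if i = j then 1 else 0)
        + x i * x j / ‖x‖ ^ 2 * (3 * gaussDefect u - 2 * u ^ 3 * exp (-u ^ 2))) := by
  intro u
  have ha : 0 < 2 * √t := by positivity
  have hr : 0 < ‖x‖ := norm_pos_iff.2 hx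
  rw [oseenT, oseenPhi_eq_oseenProfile, fderiv_fderiv_comp_norm_sq
    (fun s hs => hasDerivAt_oseenProfile ha hs)
    (hasDerivAt_oseenProfileDeriv ha (by positivity)) hx, heatKernel_eq ht]
  simp only [oseenProfileDeriv, oseenProfileDeriv2, sqrt_sq hr.le,
    EuclideanSpace.inner_single_right, PiLp.single_apply, conj_trivial, one_mul, u]
  field_simp
  ring

lemma abs_oseenBracket_le {u δ p : ℝ} (hu : 0 ≤ u) (hδ : |δ| ≤ 1) (hp : |p| ≤ 1) :
    |(2 * u ^ 3 * exp (-u ^ 2) - gaussDefect u) * δ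
      + p * (3 * gaussDefect u - 2 * u ^ 3 * exp (-u ^ 2))| ≤ 64 * u ^ 3 / (1 + u) ^ 3 := by
  rw [le_div_iff₀ (by positivity), mul_comm]
  have he : exp (-u ^ 2) ≤ 1 := exp_le_one_iff.2 (by nlinarith)
  simpa only [mul_assoc] using one_add_pow_three_mul_abs_le hu (gaussDefect_nonneg hu)
    (by positivity) (gaussDefect_le_one hu) (pow_three_mul_exp_neg_sq_le_one hu)
    (gaussDefect_le_pow_three hu) (mul_le_of_le_one_right (by positivity) he) hδ hp

theorem stmt_17 :
    ∃ c > 0, ∀ t : ℝ, 0 < t → ∀ x : EuclideanSpace ℝ (Fin 3), x ≠ 0 → ∀ i j : Fin 3,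
      |oseenT t x i j| ≤ c * (‖x‖ + t ^ ((1:ℝ)/2)) ^ (-(3:ℝ)) := by
  have hC := oseenConst_pos
  refine ⟨64 * oseenConst, by positivity, fun t ht x hx i j => ?_⟩
  have hr : 0 < ‖x‖ := norm_pos_iff.2 hx
  have hδ : |(if i = j then (1:ℝ) else 0)| ≤ 1 := by split_ifs <;> simp
  have hp : |x i * x j / ‖x‖ ^ 2| ≤ 1 := by
    rw [abs_div, abs_mul, abs_of_pos (pow_pos hr 2), div_le_one (pow_pos hr 2), sq]
    exact mul_le_mul (by simpa using PiLp.norm_apply_le x i) (by simpa using PiLp.norm_apply_le x j)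
      (abs_nonneg _) hr.le
  have hbracket := abs_oseenBracket_le (by positivity : 0 ≤ ‖x‖ / (2 * √t)) hδ hp
  rw [oseenT_eq ht hx, abs_mul, abs_of_pos (by positivity)]
  calc _ ≤ oseenConst / ‖x‖ ^ 3 * (64 * (‖x‖ / (2 * √t)) ^ 3 / (1 + ‖x‖ / (2 * √t)) ^ 3) := by
        gcongr
    _ = 64 * oseenConst / (‖x‖ + 2 * √t) ^ 3 := by field_simp; ring
    _ ≤ 64 * oseenConst / (‖x‖ + √t) ^ 3 := by
        gcongr
        linarith [sqrt_nonneg t]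
    _ = 64 * oseenConst * (‖x‖ + t ^ ((1:ℝ)/2)) ^ (-(3:ℝ)) := by
        rw [← sqrt_eq_rpow, rpow_neg (by positivity), div_eq_mul_inv]
        norm_cast
end
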